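/- arXiv:2505.14042 — 2 statements merged into one kernel-verified Lean document; each statement's English description precedes it below -/
import Mathlib

section
/- Let Y ~ Binomial(N, 1/2) and let 0 < k < N/2 be an integer. Then P[Y ≤ k] ≥ (1/sqrt(8N(k/N)(1-k/N))) · exp(-N · D(k/N || 1/2)), where D(a||b) = a ln(a/b) + (1-a) ln((1-a)/(1-b)) is the binary KL divergence. -/
/-!
`P[Y ≤ k] ≥ P[Y = k] = C(N, k) 2^{-N}` and `exp(-N D(k/N ‖ 1/2)) = N^N / (2^N k^k m^m)` for
`m = N - k`, so it suffices to show `C(N, k) k^k m^m ≥ √(N / (8km)) N^N`. Writing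
`n! = s_n √(2n) (n/e)^n` with the Stirling sequence `s`, this is `s_k s_m ≤ 2 s_{k+m}`.
The steps `log s_n - log s_{n+1}` decrease, so `log s` is discrete-convex on `n ≥ 1` and
`s_k s_m / s_{k+m}` is largest at `k = m = 1`, where it equals `s_1² / s_2 = 2`.
-/

open MeasureTheory

noncomputable def klBin (a b : ℝ) : ℝ :=
  a * Real.log (a / b) + (1 - a) * Real.log ((1 - a) / (1 - b))

open Real Nat NNReal

theorem sub_le_sub_of_antitone_sdiff {f : ℕ → ℝ} (hf : Antitone fun n ↦ f n - f (n + 1))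
    {i j : ℕ} (hij : i ≤ j) (n : ℕ) : f j - f (j + n) ≤ f i - f (i + n) := by
  have telescope (a : ℕ) :
      f a - f (a + n) = ∑ t ∈ Finset.range n, (f (a + t) - f (a + t + 1)) := by
    simpa [add_assoc] using (Finset.sum_range_sub' (fun t ↦ f (a + t)) n).symm
  rw [telescope, telescope]
  exact Finset.sum_le_sum fun t _ ↦ hf (by omega)

namespace Stirling

theorem log_stirlingSeq_sdiff_antitone :
    Antitone fun n ↦ log (stirlingSeq (n + 1)) - log (stirlingSeq (n + 1 + 1)) :=
  antitone_nat_of_succ_le fun n ↦ hasSum_le (fun j ↦ by gcongr; linarith)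
    (log_stirlingSeq_sdiff_hasSum (n + 1)) (log_stirlingSeq_sdiff_hasSum n)

theorem stirlingSeq_one_sq : stirlingSeq 1 ^ 2 = 2 * stirlingSeq 2 := by
  have : √(2 * (2 : ℕ) : ℝ) = 2 := by
    rw [show (2 * (2 : ℕ) : ℝ) = 2 ^ 2 by norm_num, sqrt_sq zero_le_two]
  rw [stirlingSeq_one, stirlingSeq, this, div_pow, sq_sqrt zero_le_two]
  field_simp
  norm_num [factorial]

theorem stirlingSeq_mul_stirlingSeq_le {k m : ℕ} (hk : k ≠ 0) (hm : m ≠ 0) :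
    stirlingSeq k * stirlingSeq m ≤ 2 * stirlingSeq (k + m) := by
  obtain ⟨a, rfl⟩ := exists_eq_succ_of_ne_zero hk
  obtain ⟨b, rfl⟩ := exists_eq_succ_of_ne_zero hm
  set L : ℕ → ℝ := fun n ↦ log (stirlingSeq (n + 1))
  have h₁ := sub_le_sub_of_antitone_sdiff (f := L) log_stirlingSeq_sdiff_antitone
    (zero_le (b + 1)) a
  have h₂ := sub_le_sub_of_antitone_sdiff (f := L) log_stirlingSeq_sdiff_antitone
    (zero_le 1) b
  rw [zero_add] at h₁
  rw [add_comm 1 b, zero_add] at h₂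
  have hlog : L a + L b + L 1 ≤ L 0 + L 0 + L (b + 1 + a) := by linarith
  have hexp := exp_le_exp.2 hlog
  simp only [L, exp_add, exp_log (stirlingSeq'_pos _), zero_add, ← sq] at hexp
  rw [stirlingSeq_one_sq] at hexp
  rw [show a.succ + b.succ = b + 1 + a + 1 by omega]
  exact le_of_mul_le_mul_right (by linarith) (stirlingSeq'_pos 1)

theorem factorial_eq_stirlingSeq_mul {n : ℕ} (hn : n ≠ 0) :
    (n ! : ℝ) = stirlingSeq n * √(2 * n) * (n / exp 1) ^ n := by
  rw [stirlingSeq]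
  field_simp

end Stirling

open Stirling in
theorem sqrt_mul_pow_le_choose_mul_pow_mul_pow {k m : ℕ} (hk : k ≠ 0) (hm : m ≠ 0) :
    √((k + m) / (8 * k * m)) * (k + m : ℝ) ^ (k + m)
      ≤ (k + m).choose k * (k : ℝ) ^ k * m ^ m := by
  have hs : 0 < stirlingSeq (k + m) := by
    obtain ⟨n, hn⟩ := exists_eq_succ_of_ne_zero hk; rw [hn, succ_add]; exact stirlingSeq'_pos _
  have hfac : ((k + m).choose k : ℝ) * k ! * m ! = (k + m)! := by
    rw [choose_symm_add]; exact_mod_cast add_choose_mul_factorial_mul_factorial k m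
  set C : ℝ := ↑((k + m).choose k)
  rw [factorial_eq_stirlingSeq_mul hk, factorial_eq_stirlingSeq_mul hm,
    factorial_eq_stirlingSeq_mul (by omega), div_pow, div_pow, div_pow] at hfac
  have hid : stirlingSeq (k + m) * √(2 * (k + m)) * (k + m) ^ (k + m)
      = C * k ^ k * m ^ m * (stirlingSeq k * stirlingSeq m) * (√(2 * k) * √(2 * m)) := by
    push_cast at hfac
    field_simp at hfac
    rw [pow_add] at hfac
    apply mul_left_cancel₀ (by positivity : exp 1 ^ k * exp 1 ^ m ≠ 0)
    linear_combination -hfac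
  have hsqrt : √((k + m) / (8 * k * m)) = √(2 * (k + m)) / (2 * (√(2 * k) * √(2 * m))) := by
    rw [← sqrt_mul (by positivity), show (2 : ℝ) = √(2 ^ 2) by simp,
      ← sqrt_mul (by positivity), ← sqrt_div' _ (by positivity)]
    congr 1
    field_simp
    ring
  rw [hsqrt, div_mul_eq_mul_div, div_le_iff₀ (by positivity)]
  refine le_of_mul_le_mul_left ?_ hs
  calc stirlingSeq (k + m) * (√(2 * (k + m)) * (k + m) ^ (k + m))
      = C * k ^ k * m ^ m * (stirlingSeq k * stirlingSeq m) * (√(2 * k) * √(2 * m)) := by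
        rw [← hid, mul_assoc]
    _ ≤ C * k ^ k * m ^ m * (2 * stirlingSeq (k + m)) * (√(2 * k) * √(2 * m)) := by
        gcongr C * _ * _ * ?_ * _; exact stirlingSeq_mul_stirlingSeq_le hk hm
    _ = _ := by ring

theorem exp_neg_mul_klBin {k m : ℕ} (hk : k ≠ 0) (hm : m ≠ 0) {q : ℝ}
    (hq₀ : 0 < q) (hq₁ : q < 1) :
    exp (-(k + m : ℕ) * klBin (k / (k + m : ℕ)) q)
      = (k + m : ℝ) ^ (k + m) / (k ^ k * m ^ m) * q ^ k * (1 - q) ^ m := by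
  push_cast
  have hlog (a b : ℝ) : log (a / ((k + m) * b)) = -log ((k + m) * b / a) := by
    rw [← log_inv, inv_div]
  have hN : -(k + m : ℝ) * klBin (k / (k + m)) q
      = k * log ((k + m) * q / k) + m * log ((k + m) * (1 - q) / m) := by
    rw [klBin, show 1 - k / (k + m : ℝ) = m / (k + m) by field_simp; ring, div_div, div_div,
      hlog, hlog]
    field_simp
    ring
  rw [hN, exp_add, exp_nat_mul, exp_nat_mul, exp_log (by positivity), exp_log (by positivity),
    div_pow, div_pow, mul_pow, mul_pow, pow_add]
  field_simp

theorem exp_neg_mul_klBin_div_sqrt_le_choose_mul {k m : ℕ} (hk : k ≠ 0) (hm : m ≠ 0) {q : ℝ}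
    (hq₀ : 0 < q) (hq₁ : q < 1) :
    1 / √(8 * (k + m : ℕ) * (k / (k + m : ℕ)) * (1 - k / (k + m : ℕ)))
        * exp (-(k + m : ℕ) * klBin (k / (k + m : ℕ)) q)
      ≤ (k + m).choose k * q ^ k * (1 - q) ^ m := by
  have hvar : 1 / √(8 * (k + m : ℕ) * (k / (k + m : ℕ)) * (1 - k / (k + m : ℕ)))
      = √((k + m) / (8 * k * m)) := by
    have h : 8 * (k + m : ℕ) * (k / (k + m : ℕ)) * (1 - k / (k + m : ℕ))
        = 8 * k * m / (k + m : ℝ) := by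
      push_cast
      field_simp
      ring
    rw [h, one_div, ← Real.sqrt_inv, inv_div]
  rw [hvar, exp_neg_mul_klBin hk hm hq₀ hq₁]
  calc √((k + m) / (8 * k * m))
        * ((k + m : ℝ) ^ (k + m) / (k ^ k * m ^ m) * q ^ k * (1 - q) ^ m)
      = √((k + m) / (8 * k * m)) * (k + m : ℝ) ^ (k + m) / (k ^ k * m ^ m)
          * (q ^ k * (1 - q) ^ m) := by ring
    _ ≤ (k + m).choose k * (k : ℝ) ^ k * m ^ m / (k ^ k * m ^ m) * (q ^ k * (1 - q) ^ m) := by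
        gcongr ?_ / _ * _; exact sqrt_mul_pow_le_choose_mul_pow_mul_pow hk hm
    _ = (k + m).choose k * q ^ k * (1 - q) ^ m := by field_simp

theorem PMF.choose_mul_pow_mul_pow_le_binomial_toMeasure (p : ℝ≥0) (h : p ≤ 1) (k m : ℕ) :
    (k + m).choose k * (p : ℝ) ^ k * (1 - p : ℝ) ^ m
      ≤ ((PMF.binomial p h (k + m)).toMeasure {y | (y : ℕ) ≤ k}).toReal := by
  let i : Fin (k + m + 1) := ⟨k, by omega⟩
  calc (k + m).choose k * (p : ℝ) ^ k * (1 - p : ℝ) ^ m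
      = (PMF.binomial p h (k + m) i).toReal := by
        simp [PMF.binomial_apply, i, ENNReal.toReal_sub_of_le (ENNReal.coe_le_one_iff.2 h)]
        ring
    _ = ((PMF.binomial p h (k + m)).toMeasure {i}).toReal := by
        rw [PMF.toMeasure_apply_singleton _ _ (measurableSet_singleton i)]
    _ ≤ _ := ENNReal.toReal_mono (measure_ne_top _ _) (measure_mono (by simp [i]))

/-- Ash's bound: For `Y ~ Binomial(N, 1/2)` and integer `0 < k < N/2`,
`P[Y ≤ k] ≥ (1/sqrt(8N(k/N)(1-k/N))) · exp(-N·D(k/N ‖ 1/2))`. -/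
theorem stmt10 (N k : ℕ) (hk : 0 < k) (hkN : 2 * k < N) :
    (((PMF.binomial (1 / 2) (by norm_num) N).toMeasure {y : Fin (N + 1) | (y : ℕ) ≤ k}).toReal
      ≥ (1 / Real.sqrt (8 * N * ((k : ℝ) / N) * (1 - (k : ℝ) / N)))
          * Real.exp (-(N : ℝ) * klBin ((k : ℝ) / N) (1 / 2))) := by
  obtain ⟨m, rfl⟩ : ∃ m, N = k + m := ⟨N - k, by omega⟩
  calc 1 / √(8 * (k + m : ℕ) * (k / (k + m : ℕ)) * (1 - k / (k + m : ℕ)))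
        * exp (-(k + m : ℕ) * klBin (k / (k + m : ℕ)) (1 / 2))
      ≤ (k + m).choose k * (1 / 2) ^ k * (1 - 1 / 2) ^ m :=
        exp_neg_mul_klBin_div_sqrt_le_choose_mul hk.ne' (by omega) (by norm_num) (by norm_num)
    _ ≤ _ := by
        simpa using PMF.choose_mul_pow_mul_pow_le_binomial_toMeasure (1 / 2) (by norm_num) k m
end

section
/- For all real N ≥ 4, (1/sqrt(2(1 - 4/N²))) · exp(-N · D(1/2 - 1/N || 1/2)) > 0.483, where D(a||1/2) = a ln(2a) + (1-a) ln(2(1-a)). -/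
/-!
Put `t = 2 / N ∈ (0, 1/2]`. Writing `1/√x = exp(-log x / 2)`, the quantity is
`exp (-(log 2 / 2 + φ t))` with `φ t = ((1-t) log(1-t) + (1+t) log(1+t)) / t + log(1 - t²) / 2`.
Since `φ' t = -log(1-t²)/t² - t/(1-t²) ≥ 1 - t/(1-t²) ≥ 0` for `t ≤ 1/2`, the quantity is smallest
at `N = 4`, where its square is exactly `2⁹/3⁷ = 512/2187 > 0.483²`.
-/

/-- Binary KL divergence with second argument `1/2`:
`D(a ‖ 1/2) = a ln(2a) + (1-a) ln(2(1-a))`. -/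
noncomputable def klHalf (a : ℝ) : ℝ :=
  a * Real.log (2 * a) + (1 - a) * Real.log (2 * (1 - a))

open Real Set

lemma klHalf_half_sub_half (t : ℝ) :
    klHalf (1 / 2 - t / 2) = ((1 - t) * log (1 - t) + (1 + t) * log (1 + t)) / 2 := by
  rw [klHalf, show 2 * (1 / 2 - t / 2) = 1 - t by ring,
    show 2 * (1 - (1 / 2 - t / 2)) = 1 + t by ring]
  ring

/-- With `t = 2 / N`, this is `N · D(1/2 - 1/N ‖ 1/2) + log √(1 - 4/N²)`. -/
noncomputable def klExponent (t : ℝ) : ℝ :=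
  ((1 - t) * log (1 - t) + (1 + t) * log (1 + t)) / t + log (1 - t ^ 2) / 2

lemma hasDerivAt_klExponent {t : ℝ} (ht₀ : 0 < t) (ht₁ : t < 1) :
    HasDerivAt klExponent (-log (1 - t ^ 2) / t ^ 2 - t / (1 - t ^ 2)) t := by
  have hm : 1 - t ≠ 0 := by linarith
  have hp : 1 + t ≠ 0 := by linarith
  have hsq : 1 - t ^ 2 ≠ 0 := by nlinarith
  have hsub : HasDerivAt (fun s => 1 - s) (-1) t := by
    simpa using (hasDerivAt_id t).const_sub 1
  have hadd : HasDerivAt (fun s => 1 + s) 1 t := by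
    simpa using (hasDerivAt_id t).const_add 1
  have hsq' : HasDerivAt (fun s => 1 - s ^ 2) (-(2 * t)) t := by
    simpa using (hasDerivAt_pow 2 t).const_sub 1
  have h := (((hsub.mul (hsub.log hm)).add (hadd.mul (hadd.log hp))).div (hasDerivAt_id t)
    ht₀.ne').add ((hsq'.log hsq).div_const 2)
  refine h.congr_deriv ?_
  rw [show 1 - t ^ 2 = (1 - t) * (1 + t) by ring, log_mul hm hp]
  simp only [id, Pi.add_apply, Pi.mul_apply]
  field_simp
  ring

lemma klExponent_deriv_nonneg {t : ℝ} (ht₀ : 0 < t) (ht₁ : t ≤ 1 / 2) :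
    0 ≤ -log (1 - t ^ 2) / t ^ 2 - t / (1 - t ^ 2) := by
  have hsq : 0 < 1 - t ^ 2 := by nlinarith
  have hlog : log (1 - t ^ 2) ≤ -t ^ 2 := by linarith [log_le_sub_one_of_pos hsq]
  have h₁ : 1 ≤ -log (1 - t ^ 2) / t ^ 2 := by
    rw [le_div_iff₀ (by positivity)]; linarith
  have h₂ : t / (1 - t ^ 2) ≤ 1 := by
    rw [div_le_one hsq]; nlinarith
  linarith

lemma klExponent_monotoneOn : MonotoneOn klExponent (Ioc 0 (1 / 2)) := by
  have hderiv : ∀ t ∈ Ioc (0 : ℝ) (1 / 2), HasDerivAt klExponent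
      (-log (1 - t ^ 2) / t ^ 2 - t / (1 - t ^ 2)) t :=
    fun t ht => hasDerivAt_klExponent ht.1 (by linarith [ht.2])
  refine monotoneOn_of_deriv_nonneg (convex_Ioc 0 (1 / 2))
    (fun t ht => (hderiv t ht).continuousAt.continuousWithinAt)
    (fun t ht => ?_) (fun t ht => ?_) <;> rw [interior_Ioc] at ht
  · exact (hderiv t (Ioo_subset_Ioc_self ht)).differentiableAt.differentiableWithinAt
  · rw [(hderiv t (Ioo_subset_Ioc_self ht)).deriv]
    exact klExponent_deriv_nonneg ht.1 ht.2.le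

lemma klExponent_half : klExponent (1 / 2) = 7 / 2 * log 3 - 5 * log 2 := by
  have h₁ : log (1 - 1 / 2) = -log 2 := by rw [show (1 : ℝ) - 1 / 2 = 2⁻¹ by norm_num, log_inv]
  have h₂ : log (1 + 1 / 2) = log 3 - log 2 := by
    rw [show (1 : ℝ) + 1 / 2 = 3 / 2 by norm_num, log_div (by norm_num) (by norm_num)]
  have h₃ : log (1 - (1 / 2) ^ 2) = log 3 - 2 * log 2 := by
    rw [show (1 : ℝ) - (1 / 2) ^ 2 = 3 / 2 ^ 2 by norm_num, log_div (by norm_num) (by norm_num),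
      log_pow]
    norm_num
  rw [klExponent, h₁, h₂, h₃]
  ring

lemma log_lt_neg_klExponent_half : log 0.483 < -(log 2 / 2 + klExponent (1 / 2)) := by
  have h : log (0.483 ^ 2) < log (2 ^ 9 / 3 ^ 7) :=
    log_lt_log (by norm_num) (by norm_num)
  rw [log_pow, log_div (by norm_num) (by norm_num), log_pow, log_pow] at h
  rw [klExponent_half]
  push_cast at h
  linarith

lemma one_div_sqrt_mul_exp_klHalf_eq (N : ℝ) (hN : 2 < N) :
    1 / √(2 * (1 - 4 / N ^ 2)) * exp (-N * klHalf (1 / 2 - 1 / N))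
      = exp (-(log 2 / 2 + klExponent (2 / N))) := by
  have hN₀ : 0 < N := by linarith
  set t := 2 / N with ht_def
  have h4 : 4 / N ^ 2 = t ^ 2 := by rw [ht_def, div_pow]; norm_num
  have ht : 0 < 1 - t ^ 2 := by
    rw [sub_pos, ht_def, div_pow, div_lt_one (by positivity)]; nlinarith
  have hsqrt : √(2 * (1 - t ^ 2)) = exp ((log 2 + log (1 - t ^ 2)) / 2) := by
    rw [← log_mul two_ne_zero ht.ne', sqrt_eq_rpow, rpow_def_of_pos (by positivity)]
    ring_nf
  rw [h4, hsqrt, one_div, ← exp_neg, ← exp_add, klExponent,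
    show 1 / 2 - 1 / N = 1 / 2 - t / 2 by rw [ht_def]; ring, klHalf_half_sub_half]
  congr 1
  rw [ht_def]
  field_simp
  ring

/-- For all real `N ≥ 4`,
`(1/sqrt(2(1 - 4/N²))) · exp(-N · D(1/2 - 1/N ‖ 1/2)) > 0.483`. -/
theorem stmt12 (N : ℝ) (hN : 4 ≤ N) :
    (1 / Real.sqrt (2 * (1 - 4 / N ^ 2))) * Real.exp (-N * klHalf (1 / 2 - 1 / N))
      > 0.483 := by
  have ht : 2 / N ∈ Ioc 0 (1 / 2) :=
    ⟨by positivity, by rw [div_le_iff₀ (by positivity)]; linarith⟩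
  have hmono : klExponent (2 / N) ≤ klExponent (1 / 2) :=
    klExponent_monotoneOn ht (right_mem_Ioc.2 (by norm_num)) ht.2
  rw [one_div_sqrt_mul_exp_klHalf_eq N (by linarith), gt_iff_lt, ← exp_log (by norm_num : (0 : ℝ) < 0.483)]
  exact exp_lt_exp.2 (by linarith [log_lt_neg_klExponent_half])
end
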